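/- arXiv:2103.00099 — 3 statements merged into one kernel-verified Lean document; each statement's English description precedes it below -/
import Mathlib

section
/- Assume (H2) holds with the constants ρ > N, C₀ > 0, r₀ > 0 and compact set M. Then there exists C > 0 such that for every ε ∈ (0,1] and every z ∈ M: 0 ≤ ∫_{ℝ^N} u_ε(x)^{2*_α} dx − ∫_{ℝ^N} b(x) η(x−z)^{2*_α} u_ε(x−z)^{2*_α} dx ≤ C ε^N. -/
/-!
After the substitution `y = x - z`, and since `u_ε ^ 2*_α = ε ^ N / (ε ^ 2 + |y| ^ 2) ^ N`, the
difference is `∫ (1 - b (y + z) η(y) ^ 2*_α) ε ^ N / (ε ^ 2 + |y| ^ 2) ^ N dy`, whose weight lies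
between `0` and `1 + sup |b|`. As `ε ^ N / (ε ^ 2 + |y| ^ 2) ^ N ≤ ε ^ N |y| ^ (-2N)`, the
integrand is at most `ε ^ N C₀ |y| ^ (ρ - 2N)` on the ball `|y| < r₀ / 2`, where `η = 1` and (H2)
applies, and at most `ε ^ N (1 + sup |b|) |y| ^ (-2N)` outside it. Both majorants are integrable
because `ρ > N`, and neither depends on `ε` or `z`.
-/

open MeasureTheory Real Filter

noncomputable section

abbrev Euc (N : ℕ) := EuclideanSpace ℝ (Fin N)

noncomputable def twoStar (N : ℕ) (α : ℝ) : ℝ := 2 * N / (N - 2 * α)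

noncomputable def bubble (N : ℕ) (α ε : ℝ) (x : Euc N) : ℝ :=
  ε ^ (((N : ℝ) - 2 * α) / 2) / (ε ^ 2 + ‖x‖ ^ 2) ^ (((N : ℝ) - 2 * α) / 2)


open Metric Module

lemma integral_sub_integral_mul_comp_sub_right {G : Type*} [AddGroup G] [MeasurableSpace G]
    [MeasurableAdd G] {μ : Measure G} [μ.IsAddRightInvariant] {f φ : G → ℝ} {C : ℝ}
    (hf : Integrable f μ) (hφ : AEStronglyMeasurable φ μ) (hφC : ∀ y, |φ y| ≤ C) (z : G) :
    (∫ x, f x ∂μ) - ∫ x, φ (x - z) * f (x - z) ∂μ = ∫ y, (1 - φ y) * f y ∂μ := by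
  rw [integral_sub_right_eq_self (fun y => φ y * f y) z,
    ← integral_sub hf (hf.bdd_mul hφ (ae_of_all _ fun y => (Real.norm_eq_abs _).trans_le (hφC y)))]
  simp only [sub_mul, one_mul]

section BubbleDensity

variable {E : Type*} [NormedAddCommGroup E]

def bubbleDensity (d ε : ℝ) (y : E) : ℝ := ε ^ d / (ε ^ 2 + ‖y‖ ^ 2) ^ d

lemma bubbleDensity_nonneg {d ε : ℝ} (hε : 0 ≤ ε) (y : E) : 0 ≤ bubbleDensity d ε y := by
  unfold bubbleDensity; positivity

lemma rpow_norm_mul_bubbleDensity_le {d ε : ℝ} (hd : 0 ≤ d) (hε : 0 ≤ ε) (y : E) :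
    ‖y‖ ^ (2 * d) * bubbleDensity d ε y ≤ ε ^ d := by
  have hy : ‖y‖ ^ (2 * d) ≤ (ε ^ 2 + ‖y‖ ^ 2) ^ d := by
    rw [Real.rpow_mul (norm_nonneg y), Real.rpow_two]
    gcongr
    nlinarith
  calc ‖y‖ ^ (2 * d) * bubbleDensity d ε y
      = ε ^ d * (‖y‖ ^ (2 * d) / (ε ^ 2 + ‖y‖ ^ 2) ^ d) := by unfold bubbleDensity; ring
    _ ≤ ε ^ d * 1 := by gcongr; exact div_le_one_of_le₀ hy (by positivity)
    _ = ε ^ d := mul_one _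

lemma measurable_bubbleDensity [MeasurableSpace E] [BorelSpace E] (d ε : ℝ) :
    Measurable (bubbleDensity (E := E) d ε) := by
  unfold bubbleDensity; fun_prop

variable [NormedSpace ℝ E] [FiniteDimensional ℝ E] [MeasurableSpace E] [BorelSpace E]
  {μ : Measure E} [μ.IsAddHaarMeasure]

lemma integrable_bubbleDensity {d ε : ℝ} (hd : (finrank ℝ E : ℝ) < 2 * d) (hε : 0 < ε) :
    Integrable (bubbleDensity d ε) μ := by
  set m := min (ε ^ 2) 1
  have hm : 0 < m := by positivity
  refine ((integrable_rpow_neg_one_add_norm_sq (μ := μ) hd).const_mul (ε ^ d / m ^ d)).mono'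
    (measurable_bubbleDensity d ε).aestronglyMeasurable (ae_of_all _ fun y => ?_)
  have hmy : m * (1 + ‖y‖ ^ 2) ≤ ε ^ 2 + ‖y‖ ^ 2 := by
    nlinarith [min_le_left (ε ^ 2) 1, min_le_right (ε ^ 2) 1, sq_nonneg ‖y‖]
  have hd0 : 0 ≤ d := by linarith [(finrank ℝ E).cast_nonneg (α := ℝ)]
  rw [Real.norm_of_nonneg (bubbleDensity_nonneg hε.le y), bubbleDensity,
    show -(2 * d) / 2 = -d by ring, Real.rpow_neg (by positivity), ← div_eq_mul_inv, div_div,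
    ← Real.mul_rpow hm.le (by positivity)]
  gcongr

lemma integrableOn_compl_ball_rpow_norm_neg {s R : ℝ} (hs : (finrank ℝ E : ℝ) < s) (hR : 0 < R) :
    IntegrableOn (fun y : E => ‖y‖ ^ (-s)) (ball 0 R)ᶜ μ := by
  have hs0 : 0 ≤ s := by linarith [(finrank ℝ E).cast_nonneg (α := ℝ)]
  refine ((integrable_one_add_norm (μ := μ) hs).const_mul (((1 + R) / R) ^ s)).integrableOn.mono'
    (Measurable.aestronglyMeasurable (by fun_prop))
    (ae_restrict_of_forall_mem measurableSet_ball.compl fun y hy => ?_)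
  have hRy : R ≤ ‖y‖ := by simpa using hy
  have hy0 : 0 < ‖y‖ := hR.trans_le hRy
  rw [Real.norm_of_nonneg (by positivity), Real.rpow_neg hy0.le, Real.rpow_neg (by positivity),
    ← Real.inv_rpow hy0.le, ← Real.inv_rpow (by positivity), ← Real.mul_rpow (by positivity)
    (by positivity)]
  gcongr
  rw [← div_eq_mul_inv, div_div, inv_eq_one_div, div_le_div_iff₀ hy0 (by positivity)]
  nlinarith

theorem exists_integral_mul_bubbleDensity_le [Nontrivial E] {d ρ R : ℝ}
    (hd : (finrank ℝ E : ℝ) < 2 * d) (hρ : 2 * d - finrank ℝ E < ρ) (hR : 0 < R)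
    (K : ℝ) {C₀ : ℝ} (hC₀ : 0 ≤ C₀) :
    ∃ C, ∀ ε, 0 < ε → ∀ w : E → ℝ, AEStronglyMeasurable w μ → (∀ y, |w y| ≤ K) →
      (∀ y ∈ ball (0 : E) R, w y ≤ C₀ * ‖y‖ ^ ρ) →
      ∫ y, w y * bubbleDensity d ε y ∂μ ≤ C * ε ^ d := by
  have hd0 : 0 ≤ d := by linarith [(finrank ℝ E).cast_nonneg (α := ℝ)]
  set G : E → ℝ := (ball 0 R).indicator (fun y => C₀ * ‖y‖ ^ (ρ - 2 * d)) +
    (ball 0 R)ᶜ.indicator (fun y => K * ‖y‖ ^ (-(2 * d)))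
  have hG : Integrable G μ := by
    refine Integrable.add ?_ ?_
    · refine (integrableOn_ball_of_norm_le_rpow finrank_pos (C := C₀) (α := 2 * d - ρ)
        (by linarith) (ae_of_all _ fun y => ?_) (Measurable.aestronglyMeasurable (by fun_prop))
        ).integrable_indicator measurableSet_ball
      rw [neg_sub, Real.norm_of_nonneg (by positivity)]
    · exact IntegrableOn.integrable_indicator
        ((integrableOn_compl_ball_rpow_norm_neg hd hR).const_mul K) measurableSet_ball.compl
  refine ⟨∫ y, G y ∂μ, fun ε hε w hw_meas hw_bdd hw_ball => ?_⟩
  have hwf : ∀ y, w y * bubbleDensity d ε y ≤ ε ^ d * G y := by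
    intro y
    have hf := bubbleDensity_nonneg (d := d) hε.le y
    have hyf := rpow_norm_mul_bubbleDensity_le hd0 hε.le y
    by_cases hy : y ∈ ball (0 : E) R
    · have hyG : G y = C₀ * ‖y‖ ^ (ρ - 2 * d) := by simp [G, hy]
      calc w y * bubbleDensity d ε y ≤ C₀ * ‖y‖ ^ ρ * bubbleDensity d ε y := by
            gcongr; exact hw_ball y hy
        _ = C₀ * (‖y‖ ^ (ρ - 2 * d) * ‖y‖ ^ (2 * d)) * bubbleDensity d ε y := by
            rw [← Real.rpow_add' (norm_nonneg _) (by linarith), sub_add_cancel]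
        _ = C₀ * ‖y‖ ^ (ρ - 2 * d) * (‖y‖ ^ (2 * d) * bubbleDensity d ε y) := by ring
        _ ≤ C₀ * ‖y‖ ^ (ρ - 2 * d) * ε ^ d := by gcongr
        _ = ε ^ d * G y := by rw [hyG]; ring
    · have hyG : G y = K * ‖y‖ ^ (-(2 * d)) := by simp [G, hy]
      have hy0 : 0 < ‖y‖ := hR.trans_le (by simpa using hy)
      have hK : 0 ≤ K := (abs_nonneg _).trans (hw_bdd y)
      calc w y * bubbleDensity d ε y ≤ K * bubbleDensity d ε y := by
            gcongr; exact (le_abs_self _).trans (hw_bdd y)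
        _ = K * ‖y‖ ^ (-(2 * d)) * (‖y‖ ^ (2 * d) * bubbleDensity d ε y) := by
            rw [Real.rpow_neg hy0.le]; field_simp
        _ ≤ K * ‖y‖ ^ (-(2 * d)) * ε ^ d := by gcongr
        _ = ε ^ d * G y := by rw [hyG]; ring
  have hwf_int : Integrable (fun y => w y * bubbleDensity d ε y) μ :=
    (integrable_bubbleDensity hd hε).bdd_mul hw_meas
      (ae_of_all _ fun y => (Real.norm_eq_abs _).trans_le (hw_bdd y))
  calc ∫ y, w y * bubbleDensity d ε y ∂μ ≤ ∫ y, ε ^ d * G y ∂μ :=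
        integral_mono hwf_int (hG.const_mul _) hwf
    _ = (∫ y, G y ∂μ) * ε ^ d := by rw [integral_const_mul, mul_comm]

end BubbleDensity

lemma bubble_rpow_twoStar {N : ℕ} {α ε : ℝ} (hα : 2 * α < N) (hε : 0 ≤ ε) (x : Euc N) :
    bubble N α ε x ^ twoStar N α = bubbleDensity N ε x := by
  have hexp : ((N : ℝ) - 2 * α) / 2 * twoStar N α = N := by
    unfold twoStar
    field_simp [(sub_pos.mpr hα).ne']
  rw [bubble, bubbleDensity, Real.div_rpow (by positivity) (by positivity), ← Real.rpow_mul hε,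
    ← Real.rpow_mul (by positivity), hexp]

lemma integral_bubble_rpow_sub_integral_mul_comp_sub_right {N : ℕ} {α ε C : ℝ}
    (hα : 2 * α < N) (hN : 0 < N) (hε : 0 < ε) {φ : Euc N → ℝ}
    (hφ : AEStronglyMeasurable φ volume) (hφC : ∀ y, |φ y| ≤ C) (z : Euc N) :
    (∫ x, bubble N α ε x ^ twoStar N α) - ∫ x, φ (x - z) * bubble N α ε (x - z) ^ twoStar N α
      = ∫ y, (1 - φ y) * bubbleDensity N ε y := by
  have hdim : (finrank ℝ (Euc N) : ℝ) < 2 * N := by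
    rw [finrank_euclideanSpace_fin]; linarith [(Nat.cast_pos (α := ℝ)).mpr hN]
  simp_rw [bubble_rpow_twoStar hα hε.le]
  exact integral_sub_integral_mul_comp_sub_right (integrable_bubbleDensity hdim hε) hφ hφC z

theorem statement_12_general (N : ℕ) (α : ℝ) (hα0 : 0 < α) (hN : 4 * α < (N : ℝ))
    (b : Euc N → ℝ) (hb_cont : Continuous b) (hb_bdd : ∃ C : ℝ, ∀ x, |b x| ≤ C)
    (r₀ : ℝ) (hr₀ : 0 < r₀)
    (η : Euc N → ℝ) (hη_cont : Continuous η) (hη01 : ∀ x, η x ∈ Set.Icc (0 : ℝ) 1)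
    (hη_one : ∀ x : Euc N, ‖x‖ ≤ r₀ / 2 → η x = 1)
    (hb_le : ∀ x, b x ≤ 1)
    (ρ C₀ : ℝ) (hρ : (N : ℝ) < ρ) (hC₀ : 0 < C₀)
    (hH2 : ∀ z : Euc N, b z = 1 → ∀ x : Euc N, ‖x - z‖ < r₀ → 1 - b x ≤ C₀ * ‖x - z‖ ^ ρ) :
    ∃ C > (0 : ℝ), ∀ ε : ℝ, 0 < ε → ε ≤ 1 → ∀ z : Euc N, b z = 1 →
      0 ≤ (∫ x : Euc N, bubble N α ε x ^ twoStar N α)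
          - (∫ x : Euc N, b x * η (x - z) ^ twoStar N α * bubble N α ε (x - z) ^ twoStar N α) ∧
      (∫ x : Euc N, bubble N α ε x ^ twoStar N α)
          - (∫ x : Euc N, b x * η (x - z) ^ twoStar N α * bubble N α ε (x - z) ^ twoStar N α)
        ≤ C * ε ^ (N : ℝ) := by
  obtain ⟨Cb, hCb⟩ := hb_bdd
  have hα : 2 * α < N := by linarith
  have hN0 : 0 < N := by exact_mod_cast (show (0 : ℝ) < N by linarith)
  have hq : 0 ≤ twoStar N α := div_nonneg (by positivity) (by linarith)
  have : Nontrivial (Euc N) := Module.nontrivial_of_finrank_pos (R := ℝ) (by simpa using hN0)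
  obtain ⟨C, hC⟩ := exists_integral_mul_bubbleDensity_le (μ := volume) (d := N) (ρ := ρ)
    (by rw [finrank_euclideanSpace_fin]; linarith) (by rw [finrank_euclideanSpace_fin]; linarith)
    (half_pos hr₀) (1 + Cb) hC₀.le
  refine ⟨max C 1, by positivity, fun ε hε _ z hz => ?_⟩
  set φ : Euc N → ℝ := fun y => b (y + z) * η y ^ twoStar N α
  have hηq : ∀ y, 0 ≤ η y ^ twoStar N α ∧ η y ^ twoStar N α ≤ 1 := fun y =>
    ⟨Real.rpow_nonneg (hη01 y).1 _, Real.rpow_le_one (hη01 y).1 (hη01 y).2 hq⟩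
  have hφ_meas : AEStronglyMeasurable φ volume :=
    ((hb_cont.measurable.comp (measurable_add_const z)).mul
      (hη_cont.measurable.pow_const _)).aestronglyMeasurable
  have hφ_bdd : ∀ y, |φ y| ≤ Cb := fun y => by
    rw [abs_mul, abs_of_nonneg (hηq y).1]
    exact (mul_le_of_le_one_right (abs_nonneg _) (hηq y).2).trans (hCb _)
  have hφ_le : ∀ y, φ y ≤ 1 := fun y => by
    nlinarith [hb_le (y + z), hηq y]
  have hD : (∫ x : Euc N, bubble N α ε x ^ twoStar N α)
      - (∫ x : Euc N, b x * η (x - z) ^ twoStar N α * bubble N α ε (x - z) ^ twoStar N α)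
      = ∫ y, (1 - φ y) * bubbleDensity N ε y := by
    rw [← integral_bubble_rpow_sub_integral_mul_comp_sub_right hα hN0 hε hφ_meas hφ_bdd z]
    simp [φ, mul_assoc]
  rw [hD]
  refine ⟨integral_nonneg fun y =>
    mul_nonneg (sub_nonneg.mpr (hφ_le y)) (bubbleDensity_nonneg hε.le y), ?_⟩
  refine (hC ε hε (fun y => 1 - φ y) (aestronglyMeasurable_const.sub hφ_meas) (fun y => ?_)
    (fun y hy => ?_)).trans (by gcongr; exact le_max_left _ _)
  · rw [abs_of_nonneg (sub_nonneg.mpr (hφ_le y))]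
    linarith [neg_abs_le (φ y), hφ_bdd y]
  · have hy' : ‖y‖ ≤ r₀ / 2 := (mem_ball_zero_iff.mp hy).le
    simpa [φ, hη_one y hy'] using hH2 z hz (y + z) (by simp; linarith)

theorem statement_12 (N : ℕ) (α : ℝ) (hα0 : 0 < α) (hα1 : α < 1) (hN : 4 * α < (N : ℝ))
    (b : Euc N → ℝ) (hb_cont : Continuous b) (hb_bdd : ∃ C : ℝ, ∀ x, |b x| ≤ C)
    (r₀ : ℝ) (hr₀ : 0 < r₀)
    (η : Euc N → ℝ) (hη_cont : Continuous η) (hη01 : ∀ x, η x ∈ Set.Icc (0 : ℝ) 1)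
    (hη_one : ∀ x : Euc N, ‖x‖ ≤ r₀ / 2 → η x = 1)
    (hη_zero : ∀ x : Euc N, r₀ ≤ ‖x‖ → η x = 0)
    (hM_ne : {z : Euc N | b z = 1}.Nonempty)
    (hM_cpt : IsCompact {z : Euc N | b z = 1})
    (hb_le : ∀ x, b x ≤ 1)
    (ρ C₀ : ℝ) (hρ : (N : ℝ) < ρ) (hC₀ : 0 < C₀)
    (hH2 : ∀ z : Euc N, b z = 1 → ∀ x : Euc N, ‖x - z‖ < r₀ → 1 - b x ≤ C₀ * ‖x - z‖ ^ ρ) :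
    ∃ C > (0 : ℝ), ∀ ε : ℝ, 0 < ε → ε ≤ 1 → ∀ z : Euc N, b z = 1 →
      0 ≤ (∫ x : Euc N, bubble N α ε x ^ twoStar N α)
          - (∫ x : Euc N, b x * η (x - z) ^ twoStar N α * bubble N α ε (x - z) ^ twoStar N α) ∧
      (∫ x : Euc N, bubble N α ε x ^ twoStar N α)
          - (∫ x : Euc N, b x * η (x - z) ^ twoStar N α * bubble N α ε (x - z) ^ twoStar N α)
        ≤ C * ε ^ (N : ℝ) :=
  statement_12_general N α hα0 hN b hb_cont hb_bdd r₀ hr₀ η hη_cont hη01 hη_one hb_le ρ C₀ hρ hC₀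
    hH2
end
end

section
/- There exists C > 0 such that for every ε ∈ (0,1]: ∫_{ℝ^N} η(x)² u_ε(x)² dx ≤ C ε^{2α}. -/
open MeasureTheory Real Filter

noncomputable section

theorem statement_13 (N : ℕ) (α : ℝ) (hα0 : 0 < α) (hα1 : α < 1) (hN : 4 * α < (N : ℝ))
    (r₀ : ℝ) (hr₀ : 0 < r₀)
    (η : Euc N → ℝ) (hη_cont : Continuous η) (hη01 : ∀ x, η x ∈ Set.Icc (0 : ℝ) 1)
    (hη_one : ∀ x : Euc N, ‖x‖ ≤ r₀ / 2 → η x = 1)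
    (hη_zero : ∀ x : Euc N, r₀ ≤ ‖x‖ → η x = 0) :
    ∃ C > (0 : ℝ), ∀ ε : ℝ, 0 < ε → ε ≤ 1 →
      (∫ x : Euc N, η x ^ 2 * bubble N α ε x ^ 2) ≤ C * ε ^ (2 * α) := by
  set p : ℝ := (N : ℝ) - 2 * α with hp_def
  have hp : 0 < p := by
    have : 2 * α < 4 * α := by nlinarith
    simp only [hp_def]; linarith
  have hN2p : (N : ℝ) < 2 * p := by simp only [hp_def]; linarith
  set g : Euc N → ℝ := fun y => ((1 : ℝ) + ‖y‖ ^ 2) ^ (-(2 * p) / 2) with hg_def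
  have hgpos : ∀ y : Euc N, (0 : ℝ) < 1 + ‖y‖ ^ 2 := fun y => by positivity
  have hg_int : Integrable g := by
    apply integrable_rpow_neg_one_add_norm_sq (μ := volume) (E := Euc N)
    rwa [finrank_euclideanSpace_fin]
  have hg_eq : ∀ y : Euc N, g y = ((1 : ℝ) + ‖y‖ ^ 2) ^ (-p) := by
    intro y; simp only [hg_def]; congr 1; ring
  set I : ℝ := ∫ y : Euc N, g y with hI_def
  have hI0 : 0 ≤ I := integral_nonneg fun y => rpow_nonneg (hgpos y).le _
  refine ⟨I + 1, by linarith, fun ε hε hε1 => ?_⟩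
  set f : Euc N → ℝ := fun x => ε ^ p * (ε ^ 2 + ‖x‖ ^ 2) ^ (-p) with hf_def
  have hden : ∀ x : Euc N, (0 : ℝ) < ε ^ 2 + ‖x‖ ^ 2 := fun x => by positivity
  -- pointwise bound
  have hbub : ∀ x : Euc N, bubble N α ε x ^ 2 = f x := by
    intro x
    have h1 : (ε ^ (p / 2)) ^ 2 = ε ^ p := by
      rw [← Real.rpow_natCast (ε ^ (p / 2)) 2, ← Real.rpow_mul hε.le]
      norm_num
    have h2 : ((ε ^ 2 + ‖x‖ ^ 2) ^ (p / 2)) ^ 2 = (ε ^ 2 + ‖x‖ ^ 2) ^ p := by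
      rw [← Real.rpow_natCast ((ε ^ 2 + ‖x‖ ^ 2) ^ (p / 2)) 2,
        ← Real.rpow_mul (hden x).le]
      norm_num
    simp only [hf_def]
    rw [bubble, div_pow, h1, h2, Real.rpow_neg (hden x).le, div_eq_mul_inv]
  have hFf : ∀ x : Euc N, η x ^ 2 * bubble N α ε x ^ 2 ≤ f x := by
    intro x
    rw [← hbub x]
    have h0 := (hη01 x).1
    have h1 := (hη01 x).2
    have hsq : η x ^ 2 ≤ 1 := by nlinarith
    calc η x ^ 2 * bubble N α ε x ^ 2 ≤ 1 * bubble N α ε x ^ 2 :=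
          mul_le_mul_of_nonneg_right hsq (sq_nonneg _)
      _ = bubble N α ε x ^ 2 := one_mul _
  have hF0 : ∀ x : Euc N, 0 ≤ η x ^ 2 * bubble N α ε x ^ 2 := fun x => by positivity
  -- f ≤ ε^(-p) * g
  have hfg : ∀ x : Euc N, f x ≤ ε ^ (-p) * g x := by
    intro x
    have hε2 : ε ^ 2 ≤ 1 := by nlinarith
    have hle : ε ^ 2 * (1 + ‖x‖ ^ 2) ≤ ε ^ 2 + ‖x‖ ^ 2 := by nlinarith [sq_nonneg ‖x‖]
    have h1 : (ε ^ 2 + ‖x‖ ^ 2) ^ (-p) ≤ (ε ^ 2 * (1 + ‖x‖ ^ 2)) ^ (-p) :=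
      rpow_le_rpow_of_nonpos (by positivity) hle (by linarith)
    have h2 : (ε ^ 2 * (1 + ‖x‖ ^ 2)) ^ (-p) = ε ^ (-(2 * p)) * g x := by
      rw [Real.mul_rpow (by positivity) (hgpos x).le, hg_eq x,
        ← Real.rpow_natCast ε 2, ← Real.rpow_mul hε.le]
      congr 1
      push_cast
      ring
    calc f x ≤ ε ^ p * (ε ^ (-(2 * p)) * g x) := by
          rw [← h2]; exact mul_le_mul_of_nonneg_left h1 (rpow_nonneg hε.le _)
      _ = ε ^ (-p) * g x := by
          rw [← mul_assoc, ← Real.rpow_add hε]; ring_nf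
  have hf0 : ∀ x : Euc N, 0 ≤ f x := fun x => by
    exact mul_nonneg (rpow_nonneg hε.le _) (rpow_nonneg (hden x).le _)
  have hf_cont : Continuous f := by
    apply Continuous.mul continuous_const
    apply Continuous.rpow_const
    · exact (continuous_const.add ((continuous_norm).pow 2))
    · intro x; left; exact (hden x).ne'
  have hf_int : Integrable f := by
    refine (hg_int.const_mul (ε ^ (-p))).mono' hf_cont.aestronglyMeasurable
      (Eventually.of_forall fun x => ?_)
    rw [Real.norm_of_nonneg (hf0 x)]
    exact hfg x
  -- scaling identity
  have hsmul : ∀ x : Euc N, f (ε • x) = ε ^ (-p) * g x := by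
    intro x
    have hn : ‖ε • x‖ ^ 2 = ε ^ 2 * ‖x‖ ^ 2 := by
      rw [norm_smul, Real.norm_of_nonneg hε.le]; ring
    simp only [hf_def, hn]
    have : ε ^ 2 + ε ^ 2 * ‖x‖ ^ 2 = ε ^ 2 * (1 + ‖x‖ ^ 2) := by ring
    rw [this, Real.mul_rpow (by positivity) (hgpos x).le, hg_eq x,
      ← Real.rpow_natCast ε 2, ← Real.rpow_mul hε.le, ← mul_assoc,
      ← Real.rpow_add hε]
    congr 1
    push_cast
    ring
  have hint_f : (∫ x : Euc N, f x) = ε ^ (2 * α) * I := by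
    have h := Measure.integral_comp_smul_of_nonneg (μ := volume) f ε (hR := hε.le)
    rw [finrank_euclideanSpace_fin] at h
    have h2 : (∫ x : Euc N, f (ε • x)) = ε ^ (-p) * I := by
      simp_rw [hsmul]
      rw [MeasureTheory.integral_const_mul]
    have hεN : (0 : ℝ) < ε ^ N := by positivity
    have h4 : (ε ^ N : ℝ) • (∫ x : Euc N, f (ε • x)) = ∫ x : Euc N, f x := by
      rw [h, smul_inv_smul₀ hεN.ne']
    rw [← h4, h2, smul_eq_mul, ← mul_assoc, ← Real.rpow_natCast ε N, ← Real.rpow_add hε]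
    congr 2
    simp only [hp_def]
    ring
  calc (∫ x : Euc N, η x ^ 2 * bubble N α ε x ^ 2)
      ≤ ∫ x : Euc N, f x :=
        integral_mono_of_nonneg (Eventually.of_forall hF0) hf_int
          (Eventually.of_forall hFf)
    _ = ε ^ (2 * α) * I := hint_f
    _ ≤ (I + 1) * ε ^ (2 * α) := by
        have := rpow_nonneg hε.le (2 * α)
        nlinarith

end
end

section
/- Let q > 0. There exists C > 0 such that for every ε ∈ (0,1]: if q > N/(N−2α) then ∫_{ℝ^N} (η(x) u_ε(x))^q dx ≤ C ε^{(2N−(N−2α)q)/2}, and if 0 < q < N/(N−2α) then ∫_{ℝ^N} (η(x) u_ε(x))^q dx ≤ C ε^{(N−2α)q/2}. -/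
set_option maxHeartbeats 800000

open MeasureTheory Real Filter Metric Set
open scoped ENNReal

noncomputable section

lemma lb_aux (N : ℕ) (hN : 0 < N) (s : ℝ) (hs0 : 0 < s) (hsN : s < N) (r₀ : ℝ) :
    ∫⁻ x : EuclideanSpace ℝ (Fin N) in Metric.ball 0 r₀,
      ENNReal.ofReal (‖x‖ ^ (-s)) < ⊤ := by
  set μ : Measure (EuclideanSpace ℝ (Fin N)) := volume
  set ν : Measure (EuclideanSpace ℝ (Fin N)) := μ.restrict (Metric.ball 0 r₀) with hν
  have hmeas : AEMeasurable (fun x : EuclideanSpace ℝ (Fin N) => ‖x‖ ^ (-s)) ν := by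
    fun_prop
  have hnn : 0 ≤ᵐ[ν] fun x : EuclideanSpace ℝ (Fin N) => ‖x‖ ^ (-s) :=
    Eventually.of_forall fun x => rpow_nonneg (norm_nonneg x) _
  rw [show (∫⁻ x : EuclideanSpace ℝ (Fin N) in Metric.ball 0 r₀,
      ENNReal.ofReal (‖x‖ ^ (-s))) = ∫⁻ x, ENNReal.ofReal (‖x‖ ^ (-s)) ∂ν from rfl,
    lintegral_eq_lintegral_meas_le ν hnn hmeas]
  set f : ℝ → ℝ≥0∞ := fun t => ν {a | t ≤ ‖a‖ ^ (-s)} with hf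
  have hball : μ (Metric.ball (0 : EuclideanSpace ℝ (Fin N)) r₀) < ⊤ := measure_ball_lt_top
  calc ∫⁻ t in Ioi (0:ℝ), f t
      ≤ ∫⁻ t in Ioc (0:ℝ) 1 ∪ Ioi 1, f t := lintegral_mono_set Ioi_subset_Ioc_union_Ioi
    _ ≤ (∫⁻ t in Ioc (0:ℝ) 1, f t) + ∫⁻ t in Ioi (1:ℝ), f t := lintegral_union_le _ _ _
    _ < ⊤ := ENNReal.add_lt_top.2 ⟨?_, ?_⟩
  · calc (∫⁻ t in Ioc (0:ℝ) 1, f t)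
        ≤ ∫⁻ _t in Ioc (0:ℝ) 1, μ (Metric.ball (0 : EuclideanSpace ℝ (Fin N)) r₀) := by
          refine lintegral_mono fun t => ?_
          exact le_trans (measure_mono (Set.subset_univ _))
            (by rw [hν, Measure.restrict_apply_univ])
      _ = μ (Metric.ball (0 : EuclideanSpace ℝ (Fin N)) r₀) * volume (Ioc (0:ℝ) 1) := by
          rw [setLIntegral_const]
      _ < ⊤ := by
          refine ENNReal.mul_lt_top hball ?_
          simp [Real.volume_Ioc]
  · have hbd : ∀ t ∈ Ioi (1:ℝ), f t ≤
        ENNReal.ofReal (t ^ (-((N:ℝ)/s))) * μ (Metric.ball (0 : EuclideanSpace ℝ (Fin N)) 1) := by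
      intro t ht
      have ht1 : (1:ℝ) < t := ht
      have ht0 : (0:ℝ) < t := lt_trans one_pos ht1
      have hsub : {a : EuclideanSpace ℝ (Fin N) | t ≤ ‖a‖ ^ (-s)} ⊆
          Metric.closedBall 0 (t ^ (-s⁻¹)) := by
        intro a ha
        simp only [Set.mem_setOf_eq] at ha
        have hna : 0 < ‖a‖ := by
          rcases eq_or_lt_of_le (norm_nonneg a) with h | h
          · exfalso
            rw [← h, Real.zero_rpow (neg_ne_zero.mpr hs0.ne')] at ha
            · exact absurd (lt_of_lt_of_le ht0 ha) (lt_irrefl 0)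
          · exact h
        rw [mem_closedBall_zero_iff]
        have := Real.rpow_le_rpow_of_nonpos (by positivity : (0:ℝ) < t) ha
          (neg_nonpos.mpr (inv_nonneg.mpr hs0.le))
        calc ‖a‖ = (‖a‖ ^ (-s)) ^ (-s⁻¹) := by
              rw [← Real.rpow_mul (norm_nonneg a), neg_mul_neg,
                mul_inv_cancel₀ hs0.ne', Real.rpow_one]
          _ ≤ t ^ (-s⁻¹) := this
      calc f t ≤ μ (Metric.closedBall (0 : EuclideanSpace ℝ (Fin N)) (t ^ (-s⁻¹))) :=
            le_trans (le_trans (measure_mono hsub) (Measure.restrict_le_self _))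
              (le_refl _)
        _ = ENNReal.ofReal ((t ^ (-s⁻¹)) ^ Module.finrank ℝ (EuclideanSpace ℝ (Fin N))) *
              μ (Metric.ball 0 1) := by
            exact Measure.addHaar_closedBall μ 0 (rpow_nonneg ht0.le _)
        _ = ENNReal.ofReal (t ^ (-((N:ℝ)/s))) * μ (Metric.ball 0 1) := by
            congr 1
            rw [finrank_euclideanSpace_fin, ← Real.rpow_natCast (t ^ (-s⁻¹)) N,
              ← Real.rpow_mul ht0.le]
            congr 1
            field_simp
    calc (∫⁻ t in Ioi (1:ℝ), f t)
        ≤ ∫⁻ t in Ioi (1:ℝ), ENNReal.ofReal (t ^ (-((N:ℝ)/s))) *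
            μ (Metric.ball (0 : EuclideanSpace ℝ (Fin N)) 1) :=
          setLIntegral_mono' measurableSet_Ioi hbd
      _ = (∫⁻ t in Ioi (1:ℝ), ENNReal.ofReal (t ^ (-((N:ℝ)/s)))) *
            μ (Metric.ball (0 : EuclideanSpace ℝ (Fin N)) 1) :=
          lintegral_mul_const' _ _ measure_ball_lt_top.ne
      _ < ⊤ := by
          refine ENNReal.mul_lt_top ?_ measure_ball_lt_top
          refine IntegrableOn.setLIntegral_lt_top ?_
          refine integrableOn_Ioi_rpow_of_lt ?_ one_pos
          rw [neg_lt_neg_iff, lt_div_iff₀ hs0, one_mul]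
          exact hsN


theorem statement_14 (N : ℕ) (α : ℝ) (hα0 : 0 < α) (hα1 : α < 1) (hN : 4 * α < (N : ℝ))
    (r₀ : ℝ) (hr₀ : 0 < r₀)
    (η : Euc N → ℝ) (hη_cont : Continuous η) (hη01 : ∀ x, η x ∈ Set.Icc (0 : ℝ) 1)
    (hη_one : ∀ x : Euc N, ‖x‖ ≤ r₀ / 2 → η x = 1)
    (hη_zero : ∀ x : Euc N, r₀ ≤ ‖x‖ → η x = 0)
    (q : ℝ) (hq : 0 < q) :
    ∃ C > (0 : ℝ), ∀ ε : ℝ, 0 < ε → ε ≤ 1 →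
      ((N : ℝ) / ((N : ℝ) - 2 * α) < q →
        (∫ x : Euc N, (η x * bubble N α ε x) ^ q)
          ≤ C * ε ^ ((2 * (N : ℝ) - ((N : ℝ) - 2 * α) * q) / 2)) ∧
      (q < (N : ℝ) / ((N : ℝ) - 2 * α) →
        (∫ x : Euc N, (η x * bubble N α ε x) ^ q)
          ≤ C * ε ^ (((N : ℝ) - 2 * α) * q / 2)) := by
  have hNα : (0:ℝ) < (N:ℝ) - 2 * α := by nlinarith
  have hN0 : 0 < N := by
    have : (0:ℝ) < (N:ℝ) := by nlinarith
    exact_mod_cast this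
  haveI : Nontrivial (Euc N) := Module.nontrivial_of_finrank_pos (R := ℝ)
    (by rw [finrank_euclideanSpace_fin]; exact hN0)
  set s : ℝ := ((N:ℝ) - 2 * α) * q with hs
  have hs0 : 0 < s := mul_pos hNα hq
  set A : ℝ := ∫ y : Euc N, ((1:ℝ) + ‖y‖ ^ 2) ^ (-(s/2)) with hA
  have hA0 : 0 ≤ A := integral_nonneg fun y => rpow_nonneg (by positivity) _
  set K : ℝ≥0∞ := ∫⁻ x : Euc N in Metric.ball 0 r₀, ENNReal.ofReal (‖x‖ ^ (-s)) with hK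
  refine ⟨A + K.toReal + 1, by positivity, ?_⟩
  intro ε hε hε1
  have hD : ∀ x : Euc N, (0:ℝ) < ε ^ 2 + ‖x‖ ^ 2 := fun x => by positivity
  have hbub_nonneg : ∀ x, 0 ≤ bubble N α ε x := fun x =>
    div_nonneg (rpow_nonneg hε.le _) (rpow_nonneg (hD x).le _)
  set F : Euc N → ℝ := fun x => (η x * bubble N α ε x) ^ q with hF
  have hF0 : ∀ x, 0 ≤ F x := fun x =>
    rpow_nonneg (mul_nonneg (hη01 x).1 (hbub_nonneg x)) _
  have hFb : ∀ x, F x ≤ (bubble N α ε x) ^ q := fun x =>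
    Real.rpow_le_rpow (mul_nonneg (hη01 x).1 (hbub_nonneg x))
      (mul_le_of_le_one_left (hbub_nonneg x) (hη01 x).2) hq.le
  have e1 : ((N:ℝ) - 2 * α) / 2 * q = s / 2 := by rw [hs]; ring
  have hbubq : ∀ x : Euc N, (bubble N α ε x) ^ q
      = ε ^ (s/2) * (ε ^ 2 + ‖x‖ ^ 2) ^ (-(s/2)) := by
    intro x
    rw [bubble, Real.div_rpow (rpow_nonneg hε.le _) (rpow_nonneg (hD x).le _),
      ← Real.rpow_mul hε.le, ← Real.rpow_mul (hD x).le, e1,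
      Real.rpow_neg (hD x).le, div_eq_mul_inv]
  have hbc : Continuous (bubble N α ε) := by
    apply Continuous.div continuous_const
    · exact Continuous.rpow_const (by continuity) fun x => Or.inl (hD x).ne'
    · exact fun x => (Real.rpow_pos_of_pos (hD x) _).ne'
  have hFcont : Continuous F :=
    Continuous.rpow_const (hη_cont.mul hbc) fun x => Or.inr hq.le
  have hFsupp : ∀ x : Euc N, r₀ ≤ ‖x‖ → F x = 0 := by
    intro x hx
    simp only [hF, hη_zero x hx, zero_mul, Real.zero_rpow hq.ne']
  have hF_int : Integrable F := by
    refine hFcont.integrable_of_hasCompactSupport ?_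
    apply HasCompactSupport.intro (isCompact_closedBall (0 : Euc N) r₀)
    intro x hx
    refine hFsupp x ?_
    rw [Metric.mem_closedBall, dist_zero_right, not_le] at hx
    exact hx.le
  constructor
  · -- case 1 : N < s
    intro hq1
    have hsN : (N:ℝ) < s := by
      rw [div_lt_iff₀ hNα] at hq1
      rw [hs]; nlinarith
    set H : Euc N → ℝ := fun y => ((1:ℝ) + ‖y‖ ^ 2) ^ (-(s/2)) with hH
    have hH_int : Integrable H := by
      have h := integrable_rpow_neg_one_add_norm_sq (E := Euc N) (μ := volume) (r := s)
        (by rwa [finrank_euclideanSpace_fin])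
      simpa [hH, neg_div] using h
    have hinv2 : ((ε ^ 2)⁻¹ : ℝ) ^ (-(s/2)) = ε ^ s := by
      have h1 : ((ε ^ 2)⁻¹ : ℝ) = ε ^ ((-2 : ℝ)) := by
        rw [Real.rpow_neg hε.le, Real.rpow_two]
      rw [h1, ← Real.rpow_mul hε.le]
      norm_num
      rw [show (2:ℝ) * (s/2) = s from by ring]
    have hGpt : ∀ x : Euc N, F x ≤ ε ^ (-(s/2)) * H (ε⁻¹ • x) := by
      intro x
      refine (hFb x).trans (le_of_eq ?_)
      rw [hbubq x]
      have hnx : ((1:ℝ) + ‖ε⁻¹ • x‖ ^ 2) = (ε ^ 2)⁻¹ * (ε ^ 2 + ‖x‖ ^ 2) := by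
        rw [norm_smul, mul_pow, norm_inv, Real.norm_eq_abs, abs_of_pos hε]
        field_simp
      have e2 : H (ε⁻¹ • x) = ε ^ s * (ε ^ 2 + ‖x‖ ^ 2) ^ (-(s/2)) := by
        simp only [hH]
        rw [hnx, Real.mul_rpow (by positivity) (hD x).le, hinv2]
      rw [e2, ← mul_assoc, ← Real.rpow_add hε,
        show -(s/2) + s = s/2 from by ring]
    have hG_int : Integrable (fun x : Euc N => ε ^ (-(s/2)) * H (ε⁻¹ • x)) := by
      have h := (integrable_comp_smul_iff (volume : Measure (Euc N)) H
        (inv_ne_zero hε.ne')).mpr hH_int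
      exact h.const_mul _
    have step : (∫ x, F x) ≤ ∫ x : Euc N, ε ^ (-(s/2)) * H (ε⁻¹ • x) :=
      integral_mono_of_nonneg (Eventually.of_forall hF0) hG_int
        (Eventually.of_forall hGpt)
    have comp : (∫ x : Euc N, ε ^ (-(s/2)) * H (ε⁻¹ • x))
        = ε ^ (-(s/2)) * (ε ^ (N:ℕ) * A) := by
      rw [integral_const_mul]
      congr 1
      rw [Measure.integral_comp_inv_smul volume H ε, finrank_euclideanSpace_fin,
        abs_of_nonneg (pow_nonneg hε.le N), smul_eq_mul]
    have efin : ε ^ (-(s/2)) * (ε ^ (N:ℕ) * A) = A * ε ^ ((2 * (N:ℝ) - s)/2) := by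
      rw [← Real.rpow_natCast ε N]
      rw [show ε ^ (-(s/2)) * (ε ^ ((N:ℕ):ℝ) * A) = (ε ^ (-(s/2)) * ε ^ ((N:ℕ):ℝ)) * A
        from by ring, ← Real.rpow_add hε]
      rw [show -(s/2) + ((N:ℕ):ℝ) = (2 * (N:ℝ) - s)/2 from by push_cast; ring]
      ring
    have hεe : (0:ℝ) < ε ^ ((2 * (N:ℝ) - s)/2) := Real.rpow_pos_of_pos hε _
    calc (∫ x, F x) ≤ ε ^ (-(s/2)) * (ε ^ (N:ℕ) * A) := step.trans comp.le
      _ = A * ε ^ ((2 * (N:ℝ) - s)/2) := efin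
      _ ≤ (A + K.toReal + 1) * ε ^ ((2 * (N:ℝ) - s)/2) := by
          have hKt : (0:ℝ) ≤ K.toReal := ENNReal.toReal_nonneg
          nlinarith
  · -- case 2 : s < N
    intro hq2
    have hsN : s < (N:ℝ) := by
      rw [lt_div_iff₀ hNα] at hq2
      rw [hs]; nlinarith
    have hK_lt : K < ⊤ := lb_aux N hN0 s hs0 hsN r₀
    set G : Euc N → ℝ≥0∞ := fun x =>
      ENNReal.ofReal (ε ^ (s/2)) * ENNReal.ofReal (‖x‖ ^ (-s)) with hG
    have hpt : ∀ x : Euc N, x ≠ 0 → ENNReal.ofReal (F x)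
        ≤ Set.indicator (Metric.ball 0 r₀) G x := by
      intro x hx
      by_cases hmem : x ∈ Metric.ball (0 : Euc N) r₀
      · rw [Set.indicator_of_mem hmem]
        show ENNReal.ofReal (F x)
          ≤ ENNReal.ofReal (ε ^ (s/2)) * ENNReal.ofReal (‖x‖ ^ (-s))
        rw [← ENNReal.ofReal_mul (rpow_nonneg hε.le _)]
        apply ENNReal.ofReal_le_ofReal
        have hnx : (0:ℝ) < ‖x‖ := norm_pos_iff.mpr hx
        have h2 : (‖x‖ ^ 2 : ℝ) ^ (-(s/2)) = ‖x‖ ^ (-s) := by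
          rw [← Real.rpow_natCast ‖x‖ 2, ← Real.rpow_mul (norm_nonneg x)]
          norm_num
          rw [show -(2 * (s/2)) = -s from by ring]
        calc F x ≤ (bubble N α ε x) ^ q := hFb x
          _ = ε ^ (s/2) * (ε ^ 2 + ‖x‖ ^ 2) ^ (-(s/2)) := hbubq x
          _ ≤ ε ^ (s/2) * ‖x‖ ^ (-s) := by
              refine mul_le_mul_of_nonneg_left ?_ (rpow_nonneg hε.le _)
              rw [← h2]
              exact Real.rpow_le_rpow_of_nonpos (by positivity)
                (by nlinarith [sq_nonneg ε]) (neg_nonpos.mpr (by positivity))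
      · rw [Set.indicator_of_notMem hmem]
        have hr : r₀ ≤ ‖x‖ := by
          rw [Metric.mem_ball, dist_zero_right, not_lt] at hmem
          exact hmem
        simp [hFsupp x hr]
    have hae : (fun x : Euc N => ENNReal.ofReal (F x))
        ≤ᵐ[volume] Set.indicator (Metric.ball 0 r₀) G := by
      have hnull : (volume : Measure (Euc N)) {(0 : Euc N)} = 0 := measure_singleton 0
      refine Filter.eventually_of_mem (?_ : {(0:Euc N)}ᶜ ∈ ae volume) ?_
      · rw [mem_ae_iff, compl_compl]
        exact hnull
      · intro x hx
        exact hpt x hx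
    have key : (∫⁻ x : Euc N, ENNReal.ofReal (F x))
        ≤ ENNReal.ofReal (ε ^ (s/2)) * K := by
      calc (∫⁻ x : Euc N, ENNReal.ofReal (F x))
          ≤ ∫⁻ x : Euc N, Set.indicator (Metric.ball 0 r₀) G x :=
            lintegral_mono_ae hae
        _ = ∫⁻ x : Euc N in Metric.ball 0 r₀, G x :=
            lintegral_indicator measurableSet_ball G
        _ = ENNReal.ofReal (ε ^ (s/2)) * K := by
            rw [hK, hG]
            exact lintegral_const_mul' _ _ ENNReal.ofReal_ne_top
    have heq : (∫ x, F x) = (∫⁻ x : Euc N, ENNReal.ofReal (F x)).toReal :=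
      integral_eq_lintegral_of_nonneg_ae (Eventually.of_forall hF0)
        hF_int.aestronglyMeasurable
    have hεe : (0:ℝ) < ε ^ (s/2) := Real.rpow_pos_of_pos hε _
    rw [heq]
    calc (∫⁻ x : Euc N, ENNReal.ofReal (F x)).toReal
        ≤ (ENNReal.ofReal (ε ^ (s/2)) * K).toReal :=
          ENNReal.toReal_mono (ENNReal.mul_ne_top ENNReal.ofReal_ne_top hK_lt.ne) key
      _ = ε ^ (s/2) * K.toReal := by
          rw [ENNReal.toReal_mul, ENNReal.toReal_ofReal hεe.le]
      _ ≤ (A + K.toReal + 1) * ε ^ (s/2) := by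
          have hKt : (0:ℝ) ≤ K.toReal := ENNReal.toReal_nonneg
          nlinarith

end
end
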